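/- Let n ≥ 1 and a, b₁,…,b_n, c ∈ ℂ. Let u be a smooth (infinitely complex-differentiable) solution of the Appell–Lauricella system E_D^n(a/2, b₁,…,b_n, c − a/2) on an open set V ⊆ ℂⁿ contained in the complement of ∏_j y_j(1−y_j) ∏_{i<j}(y_i−y_j) = 0. Then the function v(x₁,…,x_n) := u(x₁²,…,x_n²), defined on the open set {x ∈ ℂⁿ : (x₁²,…,x_n²) ∈ V}, satisfies the system 𝓔(a, b₁,…,b_n, c), i.e. D_iD_j v = Σ_{k=1}^n q^k_{ij} D_k v + q^0_{ij} v for all 1 ≤ i, j ≤ n. -/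

import Mathlib

open scoped BigOperators

noncomputable section

/-- The Euler operator `D_i = x_i ∂/∂x_i` acting on functions of `m` complex variables. -/
def Dop {m : ℕ} (i : Fin m) (u : (Fin m → ℂ) → ℂ) : (Fin m → ℂ) → ℂ :=
  fun x => x i * fderiv ℂ u x (Pi.single i 1)

/-- The coefficients `p^k_{ij}` of the Appell–Lauricella system `E_D^m(a, b, c)`. -/
def pCoeff {m : ℕ} (a : ℂ) (b : Fin m → ℂ) (c : ℂ) (k i j : Fin m) (x : Fin m → ℂ) : ℂ :=
  if i = j then
    (if k = i then
      -(∑ l ∈ Finset.univ.erase i, b l * x l / (x i - x l))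
        + ((a + b i) * x i - c + 1) / (1 - x i)
     else b i * (x i / (1 - x i) - x i / (x k - x i)))
  else if k = i then b j * x j / (x i - x j)
  else if k = j then b i * x i / (x j - x i)
  else 0

/-- The coefficients `p^0_{ij}` of the Appell–Lauricella system `E_D^m(a, b, c)`. -/
def pCoeff0 {m : ℕ} (a : ℂ) (b : Fin m → ℂ) (_c : ℂ) (i j : Fin m) (x : Fin m → ℂ) : ℂ :=
  if i = j then a * b i * x i / (1 - x i) else 0

/-- `u` solves the Appell–Lauricella hypergeometric system `E_D^m(a, b, c)`
at every point of `U`. -/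
def SolvesED {m : ℕ} (a : ℂ) (b : Fin m → ℂ) (c : ℂ) (u : (Fin m → ℂ) → ℂ)
    (U : Set (Fin m → ℂ)) : Prop :=
  ∀ x ∈ U, ∀ i j : Fin m,
    Dop i (Dop j u) x =
      (∑ k, pCoeff a b c k i j x * Dop k u x) + pCoeff0 a b c i j x * u x

/-- The coefficients `q^k_{ij}` of the system `𝓔(a, b, c)`. -/
def qCoeff {n : ℕ} (a : ℂ) (b : Fin n → ℂ) (c : ℂ) (k i j : Fin n) (x : Fin n → ℂ) : ℂ :=
  if i = j then
    (if k = i then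
      -(∑ l ∈ Finset.univ.erase i, 2 * b l * x l ^ 2 / (x i ^ 2 - x l ^ 2))
        + ((a + 2 * b i) * x i ^ 2 + a - 2 * c + 2) / (1 - x i ^ 2)
     else 2 * b i * (x i ^ 2 / (1 - x i ^ 2) - x i ^ 2 / (x k ^ 2 - x i ^ 2)))
  else if k = i then 2 * b j * x j ^ 2 / (x i ^ 2 - x j ^ 2)
  else if k = j then 2 * b i * x i ^ 2 / (x j ^ 2 - x i ^ 2)
  else 0

/-- The coefficients `q^0_{ij}` of the system `𝓔(a, b, c)`. -/
def qCoeff0 {n : ℕ} (a : ℂ) (b : Fin n → ℂ) (_c : ℂ) (i j : Fin n) (x : Fin n → ℂ) : ℂ :=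
  if i = j then 2 * a * b i * x i ^ 2 / (1 - x i ^ 2) else 0

/-- `v` solves the system `𝓔(a, b, c)` at every point of `V`. -/
def SolvesE {n : ℕ} (a : ℂ) (b : Fin n → ℂ) (c : ℂ) (v : (Fin n → ℂ) → ℂ)
    (V : Set (Fin n → ℂ)) : Prop :=
  ∀ x ∈ V, ∀ i j : Fin n,
    Dop i (Dop j v) x =
      (∑ k, qCoeff a b c k i j x * Dop k v x) + qCoeff0 a b c i j x * v x

/-- The complement of the divisor `∏_j x_j (1 - x_j) ∏_{i<j} (x_i - x_j) = 0`. -/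
def divisorComplement (m : ℕ) : Set (Fin m → ℂ) :=
  {x | (∏ j, x j * (1 - x j)) *
      ∏ p ∈ Finset.univ.filter (fun p : Fin m × Fin m => p.1 < p.2), (x p.1 - x p.2) ≠ 0}

namespace S5Aux

variable {n : ℕ}

/-- the squaring map -/
def sq (x : Fin n → ℂ) : Fin n → ℂ := fun j => x j ^ 2

lemma hasFDerivAt_sq (x : Fin n → ℂ) :
    HasFDerivAt (sq (n := n))
      (ContinuousLinearMap.pi fun j => (2 * x j) •
        ContinuousLinearMap.proj (R := ℂ) (φ := fun _ : Fin n => ℂ) j) x := by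
  rw [hasFDerivAt_pi']
  intro j
  rw [ContinuousLinearMap.proj_pi]
  have h1 : HasFDerivAt (fun x : Fin n → ℂ => x j)
      (ContinuousLinearMap.proj (R := ℂ) (φ := fun _ : Fin n => ℂ) j) x :=
    hasFDerivAt_apply j x
  have h2 := h1.mul h1
  convert h2 using 1
  · rfl
  · ext z; simp [sq]; ring
  · ext v; simp [two_mul]; ring

lemma dop_comp (g : (Fin n → ℂ) → ℂ) (x : Fin n → ℂ)
    (hg : DifferentiableAt ℂ g (sq x)) (i : Fin n) :
    Dop i (fun z => g (sq z)) x = 2 * Dop i g (sq x) := by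
  have h := hg.hasFDerivAt.comp x (hasFDerivAt_sq x)
  have hL : (ContinuousLinearMap.pi fun j => (2 * x j) •
        ContinuousLinearMap.proj (R := ℂ) (φ := fun _ : Fin n => ℂ) j)
      (Pi.single i 1 : Fin n → ℂ) = (2 * x i) • (Pi.single i 1 : Fin n → ℂ) := by
    ext j
    by_cases hj : j = i
    · subst hj; simp
    · simp [Pi.single_apply, hj]
  have heq : (fun z => g (sq z)) = g ∘ sq := rfl
  unfold Dop
  rw [heq, h.fderiv, ContinuousLinearMap.comp_apply, hL, map_smul]
  simp [sq]
  ring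

lemma dop_congr {f g : (Fin n → ℂ) → ℂ} {x : Fin n → ℂ} (h : f =ᶠ[nhds x] g) (i : Fin n) :
    Dop i f x = Dop i g x := by
  unfold Dop
  rw [h.fderiv_eq]

lemma dop_const_mul (f : (Fin n → ℂ) → ℂ) (cst : ℂ) (x : Fin n → ℂ)
    (hf : DifferentiableAt ℂ f x) (i : Fin n) :
    Dop i (fun z => cst * f z) x = cst * Dop i f x := by
  unfold Dop
  rw [fderiv_const_mul hf]
  simp
  ring

lemma diffOn_dop (V : Set (Fin n → ℂ)) (hV : IsOpen V) (u : (Fin n → ℂ) → ℂ)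
    (hu : ContDiffOn ℂ ⊤ u V) (k : Fin n) :
    DifferentiableOn ℂ (Dop k u) V := by
  have h1 : ContDiffOn ℂ ⊤ (fun y => fderiv ℂ u y) V := hu.fderiv_of_isOpen hV le_top
  have h2 : ContDiffOn ℂ ⊤ (fun y => fderiv ℂ u y (Pi.single k 1)) V :=
    h1.clm_apply contDiffOn_const
  have h3 : ContDiffOn ℂ ⊤ (fun y : Fin n → ℂ => y k) V :=
    (contDiff_apply ℂ ℂ k).contDiffOn
  exact (h3.mul h2).differentiableOn (by simp)

lemma qp (a c : ℂ) (b : Fin n → ℂ) (k i j : Fin n) (x : Fin n → ℂ) :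
    qCoeff a b c k i j x = 2 * pCoeff (a / 2) b (c - a / 2) k i j (sq x) := by
  unfold qCoeff pCoeff
  simp only [sq]
  split_ifs with h1 h2 h3 h4
  · rw [mul_add, mul_neg, Finset.mul_sum]
    congr 1
    · congr 1
      exact Finset.sum_congr rfl fun l _ => by ring
    · ring
  · ring
  · ring
  · ring
  · ring

lemma qp0 (a c : ℂ) (b : Fin n → ℂ) (i j : Fin n) (x : Fin n → ℂ) :
    qCoeff0 a b c i j x = 4 * pCoeff0 (a / 2) b (c - a / 2) i j (sq x) := by
  unfold qCoeff0 pCoeff0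
  simp only [sq]
  split_ifs with h1
  · ring
  · ring

end S5Aux

/-- if `u` is a smooth solution of `E_D^n(a/2, b₁, …, b_n, c - a/2)` on `V`,
then `v(x₁, …, x_n) := u(x₁², …, x_n²)` solves the system `𝓔(a, b₁, …, b_n, c)`. -/
theorem statement5 (n : ℕ) (hn : 1 ≤ n) (a c : ℂ) (b : Fin n → ℂ)
    (V : Set (Fin n → ℂ)) (hV : IsOpen V) (hVdiv : V ⊆ divisorComplement n)
    (u : (Fin n → ℂ) → ℂ) (hu : ContDiffOn ℂ ⊤ u V)
    (hsol : SolvesED (a / 2) b (c - a / 2) u V) :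
    SolvesE a b c (fun x => u fun j => x j ^ 2)
      {x : Fin n → ℂ | (fun j => x j ^ 2) ∈ V} := by
  intro x hx i j
  have hxV : S5Aux.sq x ∈ V := hx
  have hud : DifferentiableOn ℂ u V := hu.differentiableOn (by simp)
  have hDk : ∀ k : Fin n, DifferentiableAt ℂ (Dop k u) (S5Aux.sq x) := fun k =>
    (S5Aux.diffOn_dop V hV u hu k).differentiableAt (hV.mem_nhds hxV)
  have hDv : ∀ z, S5Aux.sq z ∈ V → ∀ k : Fin n,
      Dop k (fun x => u fun j => x j ^ 2) z = 2 * Dop k u (S5Aux.sq z) := by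
    intro z hz k
    exact S5Aux.dop_comp u z (hud.differentiableAt (hV.mem_nhds hz)) k
  have hWopen : IsOpen {z : Fin n → ℂ | S5Aux.sq z ∈ V} := by
    have hc : Continuous (S5Aux.sq (n := n)) :=
      continuous_pi fun j => (continuous_apply j).pow 2
    exact hV.preimage hc
  have hev : (Dop j (fun x => u fun j => x j ^ 2)) =ᶠ[nhds x]
      (fun z => (2 * Dop j u ·) (S5Aux.sq z)) := by
    filter_upwards [hWopen.mem_nhds hx] with z hz
    exact hDv z hz j
  have key : Dop i (Dop j (fun x => u fun j => x j ^ 2)) x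
      = 4 * Dop i (Dop j u) (S5Aux.sq x) := by
    rw [S5Aux.dop_congr hev i,
      S5Aux.dop_comp (fun y => 2 * Dop j u y) x ((hDk j).const_mul 2) i,
      S5Aux.dop_const_mul (Dop j u) 2 (S5Aux.sq x) (hDk j) i]
    ring
  rw [key, hsol _ hxV i j, mul_add, Finset.mul_sum]
  congr 1
  · refine Finset.sum_congr rfl fun k _ => ?_
    rw [hDv x hx k, S5Aux.qp]
    ring
  · rw [S5Aux.qp0]
    exact (mul_assoc _ _ _).symm

end
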